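/- arXiv:1912.07362 — 6 statements merged into one kernel-verified Lean document; each statement's English description precedes it below -/
import Mathlib

section
/- A monic real polynomial of degree n with integer coefficients is the characteristic polynomial of some integer n×n matrix (the companion matrix), hence for any observable pair (F,H) with F ∈ ℝ^{n×n}, H ∈ ℝ^{1×n}, there exists R ∈ ℝ^{n×1} such that F − R·H is similar over ℝ to an integer matrix. -/
open Polynomial Matrix Finset

def compMat (m : ℕ) (a : Fin m → ℤ) : Matrix (Fin m) (Fin m) ℤ :=
  Matrix.of fun i j => if (j : ℕ) = m - 1 then -a i else if (i : ℕ) = (j : ℕ) + 1 then 1 else 0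

theorem compMat_charpoly : ∀ (m : ℕ) (a : Fin m → ℤ),
    (compMat m a).charpoly = X ^ m + ∑ i : Fin m, C (a i) * X ^ (i : ℕ) := by
  intro m
  induction m with
  | zero => intro a; simp [Matrix.charpoly, Matrix.det_isEmpty]
  | succ m ih =>
    intro a
    have key : ∀ j : Fin (m+1), charmatrix (compMat (m+1) a) 0 j
        = (if j = 0 then X else 0) + (if (j:ℕ) = m then C (a 0) else 0) := by
      intro j
      rw [charmatrix_apply, compMat]
      simp only [Matrix.of_apply, Matrix.diagonal_apply, Nat.add_sub_cancel, Fin.ext_iff,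
        Fin.val_zero]
      split_ifs <;> simp_all
    have d0 : (charmatrix (compMat (m+1) a)).submatrix Fin.succ ((0 : Fin (m+1)).succAbove)
        = charmatrix (compMat m (a ∘ Fin.succ)) := by
      rw [Fin.succAbove_zero]
      ext i j
      rw [Matrix.submatrix_apply, charmatrix_apply, charmatrix_apply, compMat, compMat]
      have hj : (j : ℕ) < m := j.isLt
      have : ((Fin.succ i : Fin (m+1)) = Fin.succ j) ↔ (i = j) := Fin.succ_inj
      simp only [Matrix.of_apply, Matrix.diagonal_apply, this, Fin.val_succ,
        Nat.add_sub_cancel, Function.comp_apply]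
      split_ifs <;> simp_all <;> omega
    have dlast : ((charmatrix (compMat (m+1) a)).submatrix Fin.succ
        ((Fin.last m).succAbove)).det = (-1 : ℤ[X]) ^ m := by
      have hZ : ∀ i j : Fin m, ((charmatrix (compMat (m+1) a)).submatrix Fin.succ
          ((Fin.last m).succAbove)) i j
          = (if (i:ℕ)+1 = (j:ℕ) then X else 0) - (if i = j then 1 else 0) := by
        intro i j
        rw [Fin.succAbove_last, Matrix.submatrix_apply, charmatrix_apply, compMat]
        have hj : (j : ℕ) < m := j.isLt
        simp only [Matrix.of_apply, Matrix.diagonal_apply, Fin.ext_iff, Fin.val_succ,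
          Fin.coe_castSucc, Nat.add_sub_cancel]
        split_ifs <;> simp_all <;> omega
      have htri : ((charmatrix (compMat (m+1) a)).submatrix Fin.succ
          ((Fin.last m).succAbove)).BlockTriangular id := by
        intro i j hij
        rw [hZ]
        have h1 : ¬ ((i:ℕ)+1 = (j:ℕ)) := by
          simp only [id] at hij; exact by omega
        have h2 : i ≠ j := fun h => by subst h; exact lt_irrefl _ hij
        simp [h1, h2]
      rw [Matrix.det_of_upperTriangular htri]
      rw [Finset.prod_congr rfl (fun i _ => by rw [hZ]; simp : ∀ i ∈ univ,
        ((charmatrix (compMat (m+1) a)).submatrix Fin.succ ((Fin.last m).succAbove)) i i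
          = (-1 : ℤ[X]))]
      simp
    rw [Matrix.charpoly, Matrix.det_succ_row_zero]
    have hsum : ∀ j : Fin (m+1), (-1 : ℤ[X]) ^ (j:ℕ) * charmatrix (compMat (m+1) a) 0 j *
        ((charmatrix (compMat (m+1) a)).submatrix Fin.succ j.succAbove).det
        = (if j = 0 then X * ((charmatrix (compMat (m+1) a)).submatrix Fin.succ
            j.succAbove).det else 0)
          + (if j = Fin.last m then (-1:ℤ[X])^m * C (a 0) *
            ((charmatrix (compMat (m+1) a)).submatrix Fin.succ j.succAbove).det else 0) := by
      intro j
      rw [key]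
      by_cases hj0 : j = 0 <;> by_cases hjm : j = Fin.last m
      · subst hj0
        have hm : m = 0 := by
          have := congrArg Fin.val hjm; simp at this; omega
        simp [hjm, hm]
        ring
      · subst hj0
        have h1 : ¬ ((0 : Fin (m+1)) : ℕ) = m := fun h => hjm (Fin.ext (by simpa using h))
        simp [hjm, h1]
        exact Or.inl fun h => absurd h (by simpa using h1)
      · subst hjm
        have h1 : ((Fin.last m : Fin (m+1)) : ℕ) = m := rfl
        simp [hj0, h1]
      · have h1 : ¬ (j : ℕ) = m := fun h => hjm (Fin.ext (by simpa using h))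
        simp [hj0, hjm, h1]
    rw [Finset.sum_congr rfl (fun j _ => hsum j), Finset.sum_add_distrib,
      Finset.sum_ite_eq' univ (0 : Fin (m+1)), Finset.sum_ite_eq' univ (Fin.last m)]
    simp only [mem_univ, if_true]
    rw [d0, show (charmatrix (compMat m (a ∘ Fin.succ))).det
        = (compMat m (a ∘ Fin.succ)).charpoly from rfl, ih, dlast, Fin.sum_univ_succ]
    simp only [Fin.val_zero, pow_zero, mul_one, Fin.val_succ, Function.comp_apply]
    rw [mul_add, Finset.mul_sum]
    have hs : (∑ i : Fin m, X * (C (a i.succ) * X ^ (i:ℕ)))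
        = ∑ i : Fin m, C (a i.succ) * X ^ ((i:ℕ)+1) :=
      Finset.sum_congr rfl fun i _ => by ring
    rw [hs]
    have h11 : (-1:ℤ[X])^m * (-1:ℤ[X])^m = 1 := by rw [← mul_pow]; norm_num
    have h12 : (-1:ℤ[X])^m * C (a 0) * (-1:ℤ[X])^m = C (a 0) := by
      rw [show (-1:ℤ[X])^m * C (a 0) * (-1:ℤ[X])^m
        = C (a 0) * ((-1:ℤ[X])^m * (-1:ℤ[X])^m) from by ring, h11, mul_one]
    rw [h12]
    ring

theorem part1 (n : ℕ) : ∀ p : Polynomial ℤ, p.Monic → p.natDegree = n →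
      ∃ M : Matrix (Fin n) (Fin n) ℤ, M.charpoly = p := by
  intro p hm hd
  refine ⟨compMat n (fun i => p.coeff i), ?_⟩
  rw [compMat_charpoly]
  conv_rhs => rw [p.as_sum_range_C_mul_X_pow, hd, Finset.sum_range_succ]
  rw [show p.coeff n = 1 from hd ▸ hm, Polynomial.C_1, one_mul,
    ← Fin.sum_univ_eq_sum_range (fun i => C (p.coeff i) * X ^ i) n]
  ring

theorem part2 (n : ℕ) (F : Matrix (Fin n) (Fin n) ℝ) (H : Matrix (Fin 1) (Fin n) ℝ)
    (hO : IsUnit (Matrix.of (fun i j => (H * F ^ (i : ℕ)) 0 j) : Matrix (Fin n) (Fin n) ℝ)) :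
    ∃ (R : Matrix (Fin n) (Fin 1) ℝ) (T : Matrix (Fin n) (Fin n) ℝ), IsUnit T ∧
      ∀ i j, ∃ z : ℤ, (T * (F - R * H) * T⁻¹) i j = z := by
  rcases Nat.eq_zero_or_pos n with hn | hn
  · subst hn
    exact ⟨0, 1, isUnit_one, fun i => i.elim0⟩
  -- setup
  set A : Matrix (Fin n) (Fin n) ℝ := Fᵀ with hA
  set Bc : Matrix (Fin n) (Fin 1) ℝ := Hᵀ with hBc
  set c : ℕ → ℝ := fun i => A.charpoly.coeff i with hc
  set w : ℕ → Matrix (Fin n) (Fin 1) ℝ := fun i => A ^ i * Bc with hw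
  set Co : Matrix (Fin n) (Fin n) ℝ := Matrix.of (fun k i => w (i : ℕ) k 0) with hCo
  set U : Matrix (Fin n) (Fin n) ℝ := Matrix.of (fun i j : Fin n => c ((i:ℕ) + (j:ℕ) + 1)) with hU
  set S : Matrix (Fin n) (Fin n) ℝ := Co * U with hSdef
  set lst : Fin n := ⟨n-1, by omega⟩ with hlst
  set Q : Matrix (Fin n) (Fin n) ℝ := Matrix.of (fun i j : Fin n =>
    (if (i:ℕ)+1 = (j:ℕ) then (1:ℝ) else 0) - (if i = lst then c (j:ℕ) else 0)) with hQ
  set E : Matrix (Fin n) (Fin 1) ℝ := Matrix.of (fun i _ => if i = lst then (1:ℝ) else 0) with hE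
  set L : Matrix (Fin 1) (Fin n) ℝ := Matrix.of (fun _ j => Q lst j) with hL
  -- coefficient facts
  have hdeg : A.charpoly.natDegree = n := by simpa using A.charpoly_natDegree_eq_dim
  have hcn : c n = 1 := by
    have := A.charpoly_monic
    rw [Polynomial.Monic, Polynomial.leadingCoeff, hdeg] at this
    exact this
  have hczero : ∀ i, n < i → c i = 0 := fun i hi =>
    Polynomial.coeff_eq_zero_of_natDegree_lt (by omega)
  have hCH : ∑ i ∈ range (n+1), c i • A ^ i = 0 := by
    have h1 := A.aeval_self_charpoly
    rw [Polynomial.aeval_eq_sum_range, hdeg] at h1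
    exact h1
  have hCHw : ∑ i ∈ range (n+1), c i • w i = (0 : Matrix (Fin n) (Fin 1) ℝ) := by
    have : ∑ i ∈ range (n+1), c i • w i = (∑ i ∈ range (n+1), c i • A ^ i) * Bc := by
      rw [Matrix.sum_mul]
      exact Finset.sum_congr rfl fun i _ => by rw [hw, Matrix.smul_mul]
    rw [this, hCH, Matrix.zero_mul]
  -- S columns
  have hS : ∀ (k j : Fin n), S k j = ∑ i ∈ range n, c (i + (j:ℕ) + 1) * w i k 0 := by
    intro k j
    rw [hSdef, Matrix.mul_apply]
    rw [← Fin.sum_univ_eq_sum_range (fun i => c (i + (j:ℕ) + 1) * w i k 0) n]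
    exact Finset.sum_congr rfl fun i _ => by rw [hCo, hU]; simp [mul_comm]
  have hSlst : ∀ k, S k lst = Bc k 0 := by
    intro k
    rw [hS]
    have h1 : ∀ i, i + ((lst : Fin n):ℕ) + 1 = i + n := by
      intro i; rw [hlst]; simp; omega
    rw [Finset.sum_congr rfl fun i _ => by rw [h1]]
    rw [Finset.sum_eq_single 0]
    · rw [zero_add, hcn, one_mul, hw]; simp
    · intro i _ hi
      rw [hczero (i + n) (by omega), zero_mul]
    · intro h; exact absurd (Finset.mem_range.2 hn) h
  have hw0 : ∀ k, w 0 k 0 = Bc k 0 := by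
    intro k; rw [hw]; simp
  have hwsucc : ∀ i, w (i+1) = A * w i := by
    intro i; rw [hw]; simp only; rw [pow_succ', Matrix.mul_assoc]
  have hz : ∀ k, ∑ i ∈ range (n+1), c i * w i k 0 = 0 := by
    intro k
    have h0 := congrFun (congrFun hCHw k) (0 : Fin 1)
    simpa [Matrix.sum_apply, Matrix.smul_apply, smul_eq_mul] using h0
  have hASQ : A * S = S * Q := by
    ext k j
    have l1 : (A * S) k j = ∑ i ∈ range n, c (i + (j:ℕ) + 1) * w (i+1) k 0 := by
      rw [Matrix.mul_apply]
      calc ∑ m, A k m * S m j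
          = ∑ m, ∑ i ∈ range n, A k m * (c (i+(j:ℕ)+1) * w i m 0) :=
            Finset.sum_congr rfl fun m _ => by rw [hS m j, Finset.mul_sum]
        _ = ∑ i ∈ range n, ∑ m, A k m * (c (i+(j:ℕ)+1) * w i m 0) := Finset.sum_comm
        _ = ∑ i ∈ range n, c (i+(j:ℕ)+1) * w (i+1) k 0 :=
            Finset.sum_congr rfl fun i _ => by
              rw [hwsucc i, Matrix.mul_apply, Finset.mul_sum]
              exact Finset.sum_congr rfl fun m _ => by ring
    have l2 : (S * Q) k j
        = (∑ m : Fin n, if (m:ℕ)+1 = (j:ℕ) then S k m else 0) - S k lst * c (j:ℕ) := by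
      rw [Matrix.mul_apply]
      calc ∑ m, S k m * Q m j
          = ∑ m : Fin n, ((if (m:ℕ)+1 = (j:ℕ) then S k m else 0)
              - (if m = lst then S k m * c (j:ℕ) else 0)) :=
            Finset.sum_congr rfl fun m _ => by
              rw [hQ]; simp only [Matrix.of_apply]; split_ifs <;> ring
        _ = _ := by
            rw [Finset.sum_sub_distrib,
              Finset.sum_ite_eq' univ lst (fun m => S k m * c ((j:ℕ)))]
            simp
    rw [l1, l2]
    rcases Nat.eq_zero_or_pos (j:ℕ) with hj | hj
    · have e1 : (∑ m : Fin n, if (m:ℕ)+1 = (j:ℕ) then S k m else 0) = 0 :=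
        Finset.sum_eq_zero fun m _ => by rw [if_neg]; omega
      have e2 : ∑ i ∈ range n, c (i + (j:ℕ) + 1) * w (i+1) k 0
          = ∑ i ∈ range n, c (i+1) * w (i+1) k 0 :=
        Finset.sum_congr rfl fun i _ => by rw [hj]
      have e3 : ∑ i ∈ range (n+1), c i * w i k 0
          = (∑ i ∈ range n, c (i+1) * w (i+1) k 0) + c 0 * w 0 k 0 :=
        Finset.sum_range_succ' _ n
      have e4 := hz k
      rw [e1, e2, hSlst, hj]
      rw [e3] at e4
      rw [hw0] at e4
      linarith
    · set m0 : Fin n := ⟨(j:ℕ)-1, by omega⟩ with hm0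
      have e1 : (∑ m : Fin n, if (m:ℕ)+1 = (j:ℕ) then S k m else 0) = S k m0 := by
        rw [Finset.sum_eq_single m0]
        · rw [if_pos]; simp [hm0]; omega
        · intro m _ hm
          rw [if_neg]
          intro hcon
          exact hm (Fin.ext (by simp [hm0]; omega))
        · intro h; exact absurd (Finset.mem_univ m0) h
      have e2 : ∑ i ∈ range n, c (i + (j:ℕ) + 1) * w (i+1) k 0
          = ∑ i ∈ range n, c ((i+1) + (j:ℕ)) * w (i+1) k 0 :=
        Finset.sum_congr rfl fun i _ => by rw [show i + (j:ℕ) + 1 = (i+1) + (j:ℕ) by omega]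
      have e3 : ∑ i ∈ range (n+1), c (i + (j:ℕ)) * w i k 0
          = (∑ i ∈ range n, c ((i+1) + (j:ℕ)) * w (i+1) k 0) + c (0 + (j:ℕ)) * w 0 k 0 :=
        Finset.sum_range_succ' _ n
      have e4 : ∑ i ∈ range (n+1), c (i + (j:ℕ)) * w i k 0
          = ∑ i ∈ range n, c (i + (j:ℕ)) * w i k 0 + c (n + (j:ℕ)) * w n k 0 :=
        Finset.sum_range_succ _ n
      have e5 : c (n + (j:ℕ)) = 0 := hczero _ (by omega)
      have e6 : ∑ i ∈ range n, c (i + (j:ℕ)) * w i k 0 = S k m0 := by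
        rw [hS k m0]
        exact Finset.sum_congr rfl fun i _ => by
          rw [show i + ((m0 : Fin n):ℕ) + 1 = i + (j:ℕ) by simp [hm0]; omega]
      rw [e1, e2, hSlst]
      rw [e6, e5] at e4
      rw [e4, hw0, zero_add] at e3
      linarith
  have hSE : S * E = Bc := by
    ext k e
    have he : e = 0 := Subsingleton.elim _ _
    rw [Matrix.mul_apply, he]
    calc ∑ m, S k m * E m 0
        = ∑ m : Fin n, (if m = lst then S k m else 0) :=
          Finset.sum_congr rfl fun m _ => by rw [hE]; simp only [Matrix.of_apply]; split_ifs <;> ring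
      _ = S k lst := by rw [Finset.sum_ite_eq' univ lst (fun m => S k m)]; simp
      _ = Bc k 0 := hSlst k
  -- invertibility
  have hUdet : IsUnit U.det := by
    set V : Matrix (Fin n) (Fin n) ℝ := Matrix.of (fun i j : Fin n => c ((i:ℕ) + n - (j:ℕ))) with hV
    have htri : V.BlockTriangular id := by
      intro i j hij
      simp only [id] at hij
      rw [hV]; simp only [Matrix.of_apply]
      exact hczero _ (by omega)
    have hVdet : V.det = 1 := by
      rw [Matrix.det_of_upperTriangular htri]
      have hd : ∀ i : Fin n, V i i = 1 := by
        intro i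
        rw [hV]; simp only [Matrix.of_apply]
        rw [show ((i:ℕ) + n - (i:ℕ)) = n by omega]; exact hcn
      rw [Finset.prod_congr rfl fun i _ => hd i]
      simp
    have hUV : U = V.submatrix id ⇑(Fin.revPerm : Equiv.Perm (Fin n)) := by
      ext i j
      rw [hU, hV]
      simp only [Matrix.submatrix_apply, Matrix.of_apply, id, Fin.revPerm_apply, Fin.val_rev]
      congr 1
      have := j.isLt
      omega
    rw [hUV, Matrix.det_permute', hVdet, mul_one]
    exact (Equiv.Perm.sign _).isUnit.map (Int.castRingHom ℝ)
  have hCoO : Coᵀ = (Matrix.of (fun i j => (H * F ^ (i : ℕ)) 0 j) : Matrix (Fin n) (Fin n) ℝ) := by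
    ext i j
    rw [Matrix.transpose_apply, hCo]
    simp only [Matrix.of_apply]
    rw [hw]; simp only
    rw [hA, ← Matrix.transpose_pow, Matrix.mul_apply, Matrix.mul_apply]
    exact Finset.sum_congr rfl fun m _ => by
      rw [Matrix.transpose_apply, hBc, Matrix.transpose_apply]; ring
  have hCodet : IsUnit Co.det := by
    rw [← Matrix.det_transpose, hCoO]
    exact (Matrix.isUnit_iff_isUnit_det _).1 hO
  have hSdet : IsUnit S.det := by
    rw [hSdef, Matrix.det_mul]; exact hCodet.mul hUdet
  have hSunit : IsUnit S := (Matrix.isUnit_iff_isUnit_det _).2 hSdet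
  -- assemble
  refine ⟨(L * S⁻¹)ᵀ, Sᵀ, ?_, ?_⟩
  · rw [Matrix.isUnit_iff_isUnit_det, Matrix.det_transpose]; exact hSdet
  · intro i j
    have hKS : L * S⁻¹ * S = L := by
      rw [Matrix.mul_assoc, Matrix.nonsing_inv_mul S hSdet, Matrix.mul_one]
    have hconj : S⁻¹ * (A - Bc * (L * S⁻¹)) * S = Q - E * L := by
      rw [Matrix.mul_sub, Matrix.sub_mul]
      congr 1
      · rw [Matrix.mul_assoc, hASQ, ← Matrix.mul_assoc, Matrix.nonsing_inv_mul S hSdet,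
          Matrix.one_mul]
      · calc S⁻¹ * (Bc * (L * S⁻¹)) * S
            = S⁻¹ * Bc * (L * (S⁻¹ * S)) := by simp only [Matrix.mul_assoc]
          _ = S⁻¹ * Bc * L := by rw [Matrix.nonsing_inv_mul S hSdet, Matrix.mul_one]
          _ = S⁻¹ * (S * E) * L := by rw [hSE]
          _ = E * L := by rw [← Matrix.mul_assoc, Matrix.nonsing_inv_mul S hSdet,
              Matrix.one_mul]
    have hT : Sᵀ * (F - (L * S⁻¹)ᵀ * H) * Sᵀ⁻¹ = (Q - E * L)ᵀ := by
      rw [← hconj, ← Matrix.transpose_nonsing_inv]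
      have h1 : F - (L * S⁻¹)ᵀ * H = (A - Bc * (L * S⁻¹))ᵀ := by
        simp [hA, hBc, Matrix.transpose_sub, Matrix.transpose_mul]
      rw [h1, ← Matrix.transpose_mul, ← Matrix.transpose_mul, Matrix.mul_assoc]
    rw [hT]
    rcases eq_or_ne j lst with hjl | hjl
    · refine ⟨0, ?_⟩
      rw [Matrix.transpose_apply, Matrix.sub_apply, hjl, Matrix.mul_apply]
      rw [Fin.sum_univ_one, hE, hL]
      simp
    · refine ⟨if (j:ℕ)+1 = (i:ℕ) then 1 else 0, ?_⟩
      rw [Matrix.transpose_apply, Matrix.sub_apply, Matrix.mul_apply, Fin.sum_univ_one,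
        hE, hL, hQ]
      simp only [Matrix.of_apply, if_neg hjl]
      split_ifs <;> push_cast <;> ring

theorem companion_and_pole_placement (n : ℕ) :
    (∀ p : Polynomial ℤ, p.Monic → p.natDegree = n →
      ∃ M : Matrix (Fin n) (Fin n) ℤ, M.charpoly = p) ∧
    (∀ (F : Matrix (Fin n) (Fin n) ℝ) (H : Matrix (Fin 1) (Fin n) ℝ),
      IsUnit (Matrix.of (fun i j => (H * F ^ (i : ℕ)) 0 j) : Matrix (Fin n) (Fin n) ℝ) →
      ∃ (R : Matrix (Fin n) (Fin 1) ℝ) (T : Matrix (Fin n) (Fin n) ℝ), IsUnit T ∧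
        ∀ i j, ∃ z : ℤ, (T * (F - R * H) * T⁻¹) i j = z) := by
  exact ⟨part1 n, part2 n⟩
end

section
/- Given matrices F ∈ ℝ^{n×n} and H ∈ ℝ^{m×n}, suppose there exist a surjection W₁ ∈ ℝ^{n'×n}, matrices F₁₁ ∈ ℝ^{n'×n'} and H₁ ∈ ℝ^{m×n'} with F₁₁·W₁ = W₁·F and H₁·W₁ = H, an invertible T₁ ∈ ℝ^{n'×n'}, and R₁ ∈ ℝ^{n'×m} such that T₁(F₁₁ − R₁H₁)T₁⁻¹ ∈ ℤ^{n'×n'}. Then there exist F' ∈ ℤ^{n'×n'}, H' ∈ ℝ^{m×n'}, T ∈ ℝ^{n'×n} with rank n', and R ∈ ℝ^{n'×m} such that (F' + R·H')·T = T·F and H'·T = H. -/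
theorem state_matrix_conversion_lemma
    (n n' m : ℕ)
    (F : Matrix (Fin n) (Fin n) ℝ) (H : Matrix (Fin m) (Fin n) ℝ)
    (W₁ : Matrix (Fin n') (Fin n) ℝ) (F₁₁ : Matrix (Fin n') (Fin n') ℝ)
    (H₁ : Matrix (Fin m) (Fin n') ℝ) (T₁ : Matrix (Fin n') (Fin n') ℝ)
    (R₁ : Matrix (Fin n') (Fin m) ℝ)
    (hW : W₁.rank = n')
    (hF : F₁₁ * W₁ = W₁ * F) (hH : H₁ * W₁ = H)
    (hT₁ : IsUnit T₁)
    (hint : ∀ i j, ∃ z : ℤ, (T₁ * (F₁₁ - R₁ * H₁) * T₁⁻¹) i j = z) :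
    ∃ (F' : Matrix (Fin n') (Fin n') ℤ) (H' : Matrix (Fin m) (Fin n') ℝ)
      (T : Matrix (Fin n') (Fin n) ℝ) (R : Matrix (Fin n') (Fin m) ℝ),
      T.rank = n' ∧ (F'.map (Int.cast : ℤ → ℝ) + R * H') * T = T * F ∧ H' * T = H := by
  choose z hz using hint
  have hdet : IsUnit T₁.det := (Matrix.isUnit_iff_isUnit_det T₁).mp hT₁
  have hinv : T₁⁻¹ * T₁ = 1 := Matrix.nonsing_inv_mul T₁ hdet
  refine ⟨Matrix.of z, H₁ * T₁⁻¹, T₁ * W₁, T₁ * R₁, ?_, ?_, ?_⟩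
  · rw [Matrix.rank_mul_eq_right_of_isUnit_det T₁ W₁ hdet, hW]
  · have hmap : (Matrix.of z).map (Int.cast : ℤ → ℝ) = T₁ * (F₁₁ - R₁ * H₁) * T₁⁻¹ := by
      ext i j; exact (hz i j).symm
    rw [hmap]
    calc (T₁ * (F₁₁ - R₁ * H₁) * T₁⁻¹ + T₁ * R₁ * (H₁ * T₁⁻¹)) * (T₁ * W₁)
        = T₁ * (F₁₁ - R₁ * H₁) * (T₁⁻¹ * T₁) * W₁ + T₁ * R₁ * (H₁ * (T₁⁻¹ * T₁) * W₁) := by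
          simp only [Matrix.add_mul, Matrix.mul_assoc]
      _ = T₁ * (F₁₁ * W₁) := by
          rw [hinv]; simp only [Matrix.mul_one, Matrix.sub_mul, Matrix.mul_sub,
            Matrix.mul_assoc]; abel
      _ = T₁ * W₁ * F := by rw [hF, Matrix.mul_assoc]
  · calc H₁ * T₁⁻¹ * (T₁ * W₁) = H₁ * (T₁⁻¹ * T₁) * W₁ := by
          simp only [Matrix.mul_assoc]
      _ = H := by rw [hinv]; simpa using hH
end

section
/- Let T ∈ ℝ^{n'×n} and R ∈ ℝ^{n'×m} satisfy (F' + R·H')·T = T·F and H'·T = H. If x(t+1) = F x(t) + G y(t) + P r(t) and u(t) = H x(t) + J y(t) + Q r(t), then z(t) := T x(t) satisfies z(t+1) = F' z(t) + (T G − R J) y(t) + (T P − R Q) r(t) + R u(t), and u(t) = H' z(t) + J y(t) + Q r(t). -/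
theorem converted_controller_equivalence
    (n n' m p q : ℕ)
    (F : Matrix (Fin n) (Fin n) ℝ) (G : Matrix (Fin n) (Fin p) ℝ)
    (P : Matrix (Fin n) (Fin q) ℝ) (H : Matrix (Fin m) (Fin n) ℝ)
    (J : Matrix (Fin m) (Fin p) ℝ) (Q : Matrix (Fin m) (Fin q) ℝ)
    (F' : Matrix (Fin n') (Fin n') ℝ) (H' : Matrix (Fin m) (Fin n') ℝ)
    (T : Matrix (Fin n') (Fin n) ℝ) (R : Matrix (Fin n') (Fin m) ℝ)
    (hFT : (F' + R * H') * T = T * F) (hHT : H' * T = H)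
    (x : ℕ → Fin n → ℝ) (y : ℕ → Fin p → ℝ) (r : ℕ → Fin q → ℝ) (u : ℕ → Fin m → ℝ)
    (hx : ∀ t, x (t+1) = F.mulVec (x t) + G.mulVec (y t) + P.mulVec (r t))
    (hu : ∀ t, u t = H.mulVec (x t) + J.mulVec (y t) + Q.mulVec (r t)) :
    (∀ t, T.mulVec (x (t+1)) =
      F'.mulVec (T.mulVec (x t)) + (T * G - R * J).mulVec (y t)
        + (T * P - R * Q).mulVec (r t) + R.mulVec (u t)) ∧
    (∀ t, u t = H'.mulVec (T.mulVec (x t)) + J.mulVec (y t) + Q.mulVec (r t)) := by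
  constructor
  · intro t
    have key : T * F = F' * T + R * H := by
      rw [← hFT, ← hHT, Matrix.add_mul, Matrix.mul_assoc]
    simp only [hx, hu, Matrix.mulVec_add, Matrix.mulVec_mulVec, Matrix.sub_mulVec,
      Matrix.mulVec_mulVec, key, Matrix.add_mulVec]
    abel
  · intro t
    simp only [hu, Matrix.mulVec_mulVec, hHT]
end

section
/- For any matrix S ∈ ℝ^{l₁×l₂}, vector w ∈ ℝ^{l₂}, and step sizes r₁ > 0, s₁ > 0, the rounding error satisfies ‖ r₁s₁ ⌈S/s₁⌋ ⌈w/r₁⌋ − S w ‖∞ ≤ (l₂/2)‖w‖∞ s₁ + (‖S‖/2) r₁ + (l₂/4) r₁ s₁, where ⌈·⌋ denotes componentwise rounding to the nearest integer and ‖S‖ is the induced infinity norm. -/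
theorem rounding_error_bound
    (l₁ l₂ : ℕ) (S : Matrix (Fin l₁) (Fin l₂) ℝ) (w : Fin l₂ → ℝ)
    (r₁ s₁ : ℝ) (hr : 0 < r₁) (hs : 0 < s₁) :
    ∀ i : Fin l₁,
      |r₁ * s₁ * ∑ j, (round (S i j / s₁) : ℝ) * (round (w j / r₁) : ℝ) - ∑ j, S i j * w j|
        ≤ ((l₂ : ℝ) / 2) * (⨆ j, |w j|) * s₁
          + (⨆ i', ∑ j, |S i' j|) / 2 * r₁
          + ((l₂ : ℝ) / 4) * (r₁ * s₁) := by
  intro i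
  set A := ⨆ j, |w j| with hA
  set B := ⨆ i', ∑ j, |S i' j| with hB
  have hwA : ∀ j, |w j| ≤ A :=
    fun j => le_ciSup (Set.Finite.bddAbove (Set.finite_range fun j => |w j|)) j
  have hSB : ∑ j, |S i j| ≤ B :=
    le_ciSup (Set.Finite.bddAbove (Set.finite_range fun i' => ∑ j, |S i' j|)) i
  have round_err : ∀ (x t : ℝ), 0 < t → |t * (round (x / t) : ℝ) - x| ≤ t / 2 := by
    intro x t ht
    have h : |(round (x / t) : ℝ) - x / t| ≤ 1 / 2 := by
      rw [abs_sub_comm]; exact abs_sub_round _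
    have heq : t * ((round (x / t) : ℝ) - x / t) = t * (round (x / t) : ℝ) - x := by
      field_simp
    calc |t * (round (x / t) : ℝ) - x| = |t| * |(round (x / t) : ℝ) - x / t| := by
            rw [← abs_mul, heq]
      _ ≤ |t| * (1 / 2) := by
            exact mul_le_mul_of_nonneg_left h (abs_nonneg t)
      _ = t / 2 := by rw [abs_of_pos ht]; ring
  -- per-term errors
  set e : Fin l₂ → ℝ := fun j => s₁ * (round (S i j / s₁) : ℝ) - S i j with he
  set f : Fin l₂ → ℝ := fun j => r₁ * (round (w j / r₁) : ℝ) - w j with hf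
  have hej : ∀ j, |e j| ≤ s₁ / 2 := fun j => round_err _ _ hs
  have hfj : ∀ j, |f j| ≤ r₁ / 2 := fun j => round_err _ _ hr
  have hterm : ∀ j, r₁ * s₁ * ((round (S i j / s₁) : ℝ) * (round (w j / r₁) : ℝ))
      - S i j * w j = S i j * f j + e j * w j + e j * f j := by
    intro j
    simp only [he, hf]
    ring
  have hbound : ∀ j ∈ Finset.univ,
      |S i j * f j + e j * w j + e j * f j|
        ≤ |S i j| * (r₁ / 2) + (s₁ / 2) * |w j| + (s₁ / 2) * (r₁ / 2) := by
    intro j _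
    have h1 : |S i j * f j| ≤ |S i j| * (r₁ / 2) := by
      rw [abs_mul]
      exact mul_le_mul_of_nonneg_left (hfj j) (abs_nonneg _)
    have h2 : |e j * w j| ≤ (s₁ / 2) * |w j| := by
      rw [abs_mul]
      exact mul_le_mul_of_nonneg_right (hej j) (abs_nonneg _)
    have h3 : |e j * f j| ≤ (s₁ / 2) * (r₁ / 2) := by
      rw [abs_mul]
      exact mul_le_mul (hej j) (hfj j) (abs_nonneg _) (by positivity)
    calc |S i j * f j + e j * w j + e j * f j|
        ≤ |S i j * f j + e j * w j| + |e j * f j| := abs_add_le _ _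
      _ ≤ |S i j * f j| + |e j * w j| + |e j * f j| := by
          have := abs_add_le (S i j * f j) (e j * w j); linarith
      _ ≤ _ := by linarith
  have hLHS : |r₁ * s₁ * ∑ j, (round (S i j / s₁) : ℝ) * (round (w j / r₁) : ℝ)
      - ∑ j, S i j * w j|
      ≤ ∑ j, (|S i j| * (r₁ / 2) + (s₁ / 2) * |w j| + (s₁ / 2) * (r₁ / 2)) := by
    have hrw : r₁ * s₁ * ∑ j, (round (S i j / s₁) : ℝ) * (round (w j / r₁) : ℝ)
        - ∑ j, S i j * w j
        = ∑ j, (S i j * f j + e j * w j + e j * f j) := by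
      rw [Finset.mul_sum, ← Finset.sum_sub_distrib]
      exact Finset.sum_congr rfl fun j _ => hterm j
    rw [hrw]
    exact (Finset.abs_sum_le_sum_abs _ _).trans (Finset.sum_le_sum hbound)
  have hsum : ∑ j, (|S i j| * (r₁ / 2) + (s₁ / 2) * |w j| + (s₁ / 2) * (r₁ / 2))
      = (∑ j, |S i j|) * (r₁ / 2) + (s₁ / 2) * (∑ j, |w j|)
        + (l₂ : ℝ) * ((s₁ / 2) * (r₁ / 2)) := by
    rw [Finset.sum_add_distrib, Finset.sum_add_distrib, ← Finset.sum_mul,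
      ← Finset.mul_sum, Finset.sum_const, Finset.card_univ, Fintype.card_fin,
      nsmul_eq_mul]
  have hwsum : ∑ j, |w j| ≤ (l₂ : ℝ) * A := by
    calc ∑ j, |w j| ≤ ∑ _j : Fin l₂, A := Finset.sum_le_sum fun j _ => hwA j
      _ = (l₂ : ℝ) * A := by
          rw [Finset.sum_const, Finset.card_univ, Fintype.card_fin, nsmul_eq_mul]
  rw [hsum] at hLHS
  nlinarith [hLHS, mul_le_mul_of_nonneg_right hSB (le_of_lt (half_pos hr)),
    mul_le_mul_of_nonneg_left hwsum (le_of_lt (half_pos hs))]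
end

section
/- Combining the previous facts: let z̃ and ẑ be the integer-arithmetic and mod-q controller states driven by the same input sequences, with integer state matrix F' and outputs ũ(t) = H' z̃(t) + w(t), û(t) = H' ẑ(t) + w(t) mod q. If for all t and all i, ũ_i(t) ∈ [u_i^min, u_i^max] with q ≥ max_i(u_i^max − u_i^min + 1), then û(t) mod U = ũ(t) for all t ∈ ℕ, where mod U is the biased modulo onto u^min + ℤ_qᵐ. -/
theorem modq_controller_with_biased_decoding
    (n m : ℕ) (q : ℕ) (hq : 0 < q)
    (F' : Matrix (Fin n) (Fin n) ℤ) (H' : Matrix (Fin m) (Fin n) ℤ)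
    (v : ℕ → Fin n → ℤ) (w : ℕ → Fin m → ℤ) (z₀ : Fin n → ℤ)
    (zt zh : ℕ → Fin n → ℤ) (ut uh : ℕ → Fin m → ℤ)
    (hzt0 : zt 0 = z₀)
    (hzt : ∀ t, zt (t+1) = F'.mulVec (zt t) + v t)
    (hzh0 : ∀ i, zh 0 i = z₀ i % (q : ℤ))
    (hzh : ∀ t i, zh (t+1) i = (F'.mulVec (zh t) + v t) i % (q : ℤ))
    (hut : ∀ t, ut t = H'.mulVec (zt t) + w t)
    (huh : ∀ t i, uh t i = (H'.mulVec (zh t) + w t) i % (q : ℤ))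
    (umin umax : Fin m → ℤ)
    (hbound : ∀ t i, umin i ≤ ut t i ∧ ut t i ≤ umax i)
    (hqrange : ∀ i, umax i - umin i + 1 ≤ (q : ℤ)) :
    ∀ t i, uh t i - ((uh t i - umin i).fdiv (q : ℤ)) * (q : ℤ) = ut t i := by
  -- state congruence in ZMod q
  have hz : ∀ t i, ((zh t i : ZMod q)) = ((zt t i : ZMod q)) := by
    intro t
    induction t with
    | zero =>
      intro i
      rw [hzh0, hzt0, ZMod.intCast_mod]
    | succ t ih =>
      intro i
      rw [hzh, hzt, ZMod.intCast_mod]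
      simp only [Pi.add_apply, Matrix.mulVec, dotProduct]
      push_cast
      exact congrArg (· + _) (Finset.sum_congr rfl fun j _ => by rw [ih j])
  have hu : ∀ t i, ((uh t i : ZMod q)) = ((ut t i : ZMod q)) := by
    intro t i
    rw [huh, hut, ZMod.intCast_mod]
    simp only [Pi.add_apply, Matrix.mulVec, dotProduct]
    push_cast
    exact congrArg (· + _) (Finset.sum_congr rfl fun j _ => by rw [hz t j])
  intro t i
  have hmod : (uh t i - umin i) % (q : ℤ) = (ut t i - umin i) % (q : ℤ) := by
    have := (ZMod.intCast_eq_intCast_iff' _ _ _).mp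
      (by (push_cast [hu t i]; rfl) : ((uh t i - umin i : ℤ) : ZMod q) = ((ut t i - umin i : ℤ) : ZMod q))
    exact this
  have h0 : (0 : ℤ) ≤ ut t i - umin i := by linarith [(hbound t i).1]
  have h1 : ut t i - umin i < (q : ℤ) := by linarith [(hbound t i).2, hqrange i]
  have hfd : (uh t i - umin i).fdiv (q : ℤ) = (uh t i - umin i) / (q : ℤ) :=
    Int.fdiv_eq_ediv_of_nonneg _ (by positivity)
  have hed : (uh t i - umin i) % (q : ℤ) = (uh t i - umin i) - (uh t i - umin i) / (q : ℤ) * (q : ℤ) := by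
    rw [Int.emod_def]; ring
  have : (ut t i - umin i) % (q : ℤ) = ut t i - umin i := Int.emod_eq_of_lt h0 h1
  rw [hfd]
  linarith [hmod, hed, this]
end

section
/- In the GSW-type scheme, let sk ∈ ℤⁿ, Dec(c) = [1, sk]·c mod q. Let Enc'(k) = k·[I_{n+1}, ν I_{n+1}, …, ν^{d−1} I_{n+1}] + [B; A] mod q where [1, sk]·[B; A] = E with ‖E‖∞ ≤ n'·k₀σ and n' = d(n+1). Then for every k ∈ ℤ_q and c ∈ ℤ_q^{n+1}, Dec(Mult(Enc'(k), c)) = k·Dec(c) + Δ mod q for some Δ ∈ ℤ with |Δ| ≤ d(n+1)·k₀σ·ν, where Mult(c', c) = c'·col{c_i}_{i=0}^{d−1} mod q with c_i the base-ν digits of c. -/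
/-
With `x_t = c / ν ^ t`, the `fdiv` expression defining the digits is `x_t % ν = x_t - ν x_{t+1}`, so
`∑_{t<d} ν ^ t · digit_t` telescopes to `c - ν ^ d x_d = c % ν ^ d`, which is `c` because `c < q ≤ ν ^ d`:
the gadget matrix recombines the digits. Hence `[1, sk] (k G + [B; A]) digits = k [1, sk] c + E digits`
exactly; reducing entries mod `q` changes nothing mod `q`, and `|E digits| ≤ ‖E‖₁ ν` since every digit
lies in `[0, ν)`.
-/

open Matrix

namespace Int

theorem fdiv_pow_sub_fdiv_pow_succ_mul {ν : ℤ} (hν : 0 ≤ ν) (a : ℤ) (t : ℕ) :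
    a.fdiv (ν ^ t) - a.fdiv (ν ^ (t + 1)) * ν = a / ν ^ t % ν := by
  rw [fdiv_eq_ediv_of_nonneg _ (pow_nonneg hν t), fdiv_eq_ediv_of_nonneg _ (pow_nonneg hν _),
    emod_def, pow_succ, ← ediv_ediv_of_nonneg (pow_nonneg hν t)]
  ring

theorem sum_pow_mul_ediv_pow_emod {ν : ℤ} (hν : 0 ≤ ν) (a : ℤ) (d : ℕ) :
    ∑ t : Fin d, ν ^ (t : ℕ) * (a / ν ^ (t : ℕ) % ν) = a % ν ^ d := by
  have htelescope (t : ℕ) :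
      ν ^ t * (a / ν ^ t % ν) = ν ^ t * (a / ν ^ t) - ν ^ (t + 1) * (a / ν ^ (t + 1)) := by
    rw [emod_def, ediv_ediv_of_nonneg (pow_nonneg hν t), ← pow_succ]
    ring
  simp only [htelescope]
  rw [Fin.sum_univ_eq_sum_range (fun t => ν ^ t * (a / ν ^ t) - ν ^ (t + 1) * (a / ν ^ (t + 1))),
    Finset.sum_range_sub' (fun t => ν ^ t * (a / ν ^ t)), emod_def]
  simp

theorem dotProduct_mulVec_emod_modEq {m n : Type*} [Fintype m] [Fintype n] (q : ℤ) (w : m → ℤ)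
    (M : Matrix m n ℤ) (x : n → ℤ) :
    w ⬝ᵥ (fun i => ((Matrix.of fun i j => M i j % q) *ᵥ x) i % q) ≡ w ⬝ᵥ (M *ᵥ x) [ZMOD q] :=
  ModEq.sum fun _ _ => ModEq.mul_left _ <|
    (mod_modEq _ _).trans (ModEq.sum fun _ _ => (mod_modEq _ _).mul_right _)

end Int

theorem Matrix.mulVec_gadget {R ι m : Type*} [NonAssocSemiring R] [Fintype ι] [Fintype m]
    [DecidableEq m] (g : ι → R) (x : ι × m → R) :
    (Matrix.of fun i (p : ι × m) => if p.2 = i then g p.1 else 0) *ᵥ x =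
      fun i => ∑ t, g t * x (t, i) := by
  ext i
  simp [mulVec, dotProduct, Fintype.sum_prod_type]

theorem Matrix.dotProduct_smul_add_mulVec {R m n : Type*} [CommSemiring R] [Fintype m] [Fintype n]
    (w : m → R) (k : R) (G A : Matrix m n R) (x : n → R) :
    w ⬝ᵥ ((k • G + A) *ᵥ x) = k * (w ⬝ᵥ (G *ᵥ x)) + (w ᵥ* A) ⬝ᵥ x := by
  rw [add_mulVec, smul_mulVec, dotProduct_add, dotProduct_smul, smul_eq_mul, dotProduct_mulVec w A]

theorem abs_dotProduct_le {R ι : Type*} [Ring R] [LinearOrder R] [IsOrderedRing R]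
    [Fintype ι] (w v : ι → R) {b : R} (hv : ∀ j, |v j| ≤ b) :
    |w ⬝ᵥ v| ≤ (∑ j, |w j|) * b := by
  rw [Finset.sum_mul]
  refine (Finset.abs_sum_le_sum_abs _ _).trans (Finset.sum_le_sum fun j _ => ?_)
  rw [abs_mul]
  exact mul_le_mul_of_nonneg_left (hv j) (abs_nonneg _)

theorem gsw_mult_homomorphic_property_general
    (n q₀ ν₀ d : ℕ)
    (hle : ((2 : ℤ) ^ q₀) ≤ ((2 : ℤ) ^ ν₀) ^ d)
    (k₀σ : ℝ) (sk : Fin n → ℤ)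
    (BA : Matrix (Fin (n+1)) (Fin d × Fin (n+1)) ℤ)
    (E : Fin d × Fin (n+1) → ℤ)
    (hE : ∀ j, (∑ i, (Fin.cons 1 sk : Fin (n+1) → ℤ) i * BA i j) = E j)
    (hEbound : (∑ j, (|E j| : ℝ)) ≤ ((d * (n+1) : ℕ) : ℝ) * k₀σ)
    (k : ℤ)
    (c : Fin (n+1) → ℤ) (hc : ∀ j, 0 ≤ c j ∧ c j < (2 : ℤ) ^ q₀) :
    let q : ℤ := (2 : ℤ) ^ q₀
    let ν : ℤ := (2 : ℤ) ^ ν₀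
    let key : Fin (n+1) → ℤ := Fin.cons 1 sk
    let Dec : (Fin (n+1) → ℤ) → ℤ := fun c' => (∑ i, key i * c' i) % q
    -- gadget matrix [I, νI, ..., ν^{d-1} I]
    let gadget : Matrix (Fin (n+1)) (Fin d × Fin (n+1)) ℤ :=
      Matrix.of fun i p => if p.2 = i then ν ^ (p.1 : ℕ) else 0
    let enc'k : Matrix (Fin (n+1)) (Fin d × Fin (n+1)) ℤ :=
      Matrix.of fun i p => (k * gadget i p + BA i p) % q
    -- base-ν digits of c
    let digits : Fin d × Fin (n+1) → ℤ :=
      fun p => (c p.2).fdiv (ν ^ (p.1 : ℕ)) - ((c p.2).fdiv (ν ^ ((p.1 : ℕ) + 1))) * ν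
    let mult : Fin (n+1) → ℤ := fun i => (enc'k.mulVec digits) i % q
    ∃ Δ : ℤ, |(Δ : ℝ)| ≤ ((d * (n+1) : ℕ) : ℝ) * k₀σ * ((2 : ℝ) ^ ν₀) ∧
      Dec mult = (k * Dec c + Δ) % q := by
  intro q ν key Dec gadget enc'k digits mult
  have hν : 0 < ν := by positivity
  have hdigits : digits = fun p => c p.2 / ν ^ (p.1 : ℕ) % ν :=
    funext fun p => Int.fdiv_pow_sub_fdiv_pow_succ_mul hν.le _ _
  have hrecombine : gadget *ᵥ digits = c := by
    refine (mulVec_gadget (fun t : Fin d => ν ^ (t : ℕ)) digits).trans (funext fun j => ?_)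
    rw [hdigits]
    exact (Int.sum_pow_mul_ediv_pow_emod hν.le (c j) d).trans
      (Int.emod_eq_of_lt (hc j).1 ((hc j).2.trans_le hle))
  have hnoise : key ᵥ* BA = E := funext hE
  refine ⟨E ⬝ᵥ digits, ?_, ?_⟩
  · have hdigit_abs (p) : |digits p| ≤ ν := by
      rw [hdigits, abs_of_nonneg (Int.emod_nonneg _ hν.ne')]
      exact (Int.emod_lt_of_pos _ hν).le
    have hbound : ((|E ⬝ᵥ digits| : ℤ) : ℝ) ≤ ((∑ j, |E j| : ℤ) : ℝ) * ((2 ^ ν₀ : ℤ) : ℝ) := by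
      exact_mod_cast abs_dotProduct_le E digits hdigit_abs
    push_cast at hbound
    exact hbound.trans (mul_le_mul_of_nonneg_right hEbound (by positivity))
  · have hdec := Int.dotProduct_mulVec_emod_modEq q key (k • gadget + BA) digits
    rw [dotProduct_smul_add_mulVec, hrecombine, hnoise] at hdec
    exact hdec.trans (((Int.mod_modEq _ _).symm.mul_left k).add_right _)

theorem gsw_mult_homomorphic_property
    (n q₀ ν₀ d : ℕ) (hd : 0 < d)
    (hlt : ((2 : ℤ) ^ ν₀) ^ (d - 1) < (2 : ℤ) ^ q₀)
    (hle : ((2 : ℤ) ^ q₀) ≤ ((2 : ℤ) ^ ν₀) ^ d)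
    (k₀σ : ℝ) (sk : Fin n → ℤ)
    (BA : Matrix (Fin (n+1)) (Fin d × Fin (n+1)) ℤ)
    (E : Fin d × Fin (n+1) → ℤ)
    (hE : ∀ j, (∑ i, (Fin.cons 1 sk : Fin (n+1) → ℤ) i * BA i j) = E j)
    (hEbound : (∑ j, (|E j| : ℝ)) ≤ ((d * (n+1) : ℕ) : ℝ) * k₀σ)
    (k : ℤ) (hk : 0 ≤ k ∧ k < (2 : ℤ) ^ q₀)
    (c : Fin (n+1) → ℤ) (hc : ∀ j, 0 ≤ c j ∧ c j < (2 : ℤ) ^ q₀) :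
    let q : ℤ := (2 : ℤ) ^ q₀
    let ν : ℤ := (2 : ℤ) ^ ν₀
    let key : Fin (n+1) → ℤ := Fin.cons 1 sk
    let Dec : (Fin (n+1) → ℤ) → ℤ := fun c' => (∑ i, key i * c' i) % q
    -- gadget matrix [I, νI, ..., ν^{d-1} I]
    let gadget : Matrix (Fin (n+1)) (Fin d × Fin (n+1)) ℤ :=
      Matrix.of fun i p => if p.2 = i then ν ^ (p.1 : ℕ) else 0
    let enc'k : Matrix (Fin (n+1)) (Fin d × Fin (n+1)) ℤ :=
      Matrix.of fun i p => (k * gadget i p + BA i p) % q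
    -- base-ν digits of c
    let digits : Fin d × Fin (n+1) → ℤ :=
      fun p => (c p.2).fdiv (ν ^ (p.1 : ℕ)) - ((c p.2).fdiv (ν ^ ((p.1 : ℕ) + 1))) * ν
    let mult : Fin (n+1) → ℤ := fun i => (enc'k.mulVec digits) i % q
    ∃ Δ : ℤ, |(Δ : ℝ)| ≤ ((d * (n+1) : ℕ) : ℝ) * k₀σ * ((2 : ℝ) ^ ν₀) ∧
      Dec mult = (k * Dec c + Δ) % q :=
  gsw_mult_homomorphic_property_general n q₀ ν₀ d hle k₀σ sk BA E hE hEbound k c hc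
end
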